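/- For real numbers a < b with a + b ≥ 0 and any 0 < τ < 1, the inequality τ·δ_{a,b}(t) < δ_{a,b}(τt) holds for all t > 0; that is, the function −δ_{a,b} is star-shaped on (0, ∞). -/

import Mathlib

open Real Set

/-! With `c = b - a` one has `δ_{a,b}(t) = a + c δ_{0,1}(ct)` and
`δ_{0,1}(s) - 1/2 = coth (s/2) / 2 - 1/s`. Since `(1 - τ)(a + b) ≥ 0`, the claim reduces to the
strict decrease of `(δ_{0,1}(s) - 1/2) / s` on `(0, ∞)`. The derivative of that quotient has the
sign of `-(s sinh s + s² + 4 - 4 cosh s)`, and this last function is positive because its first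
three derivatives vanish at `0` and its fourth derivative is `s sinh s > 0`. -/

noncomputable def delta (a b t : ℝ) : ℝ :=
  (b * exp (b * t) - a * exp (a * t)) / (exp (b * t) - exp (a * t)) - 1 / t

lemma apply_zero_lt_of_hasDerivAt_pos {f f' : ℝ → ℝ} (hf : ∀ x, HasDerivAt f (f' x) x)
    (hf' : ∀ x, 0 < x → 0 < f' x) {x : ℝ} (hx : 0 < x) : f 0 < f x :=
  strictMonoOn_of_hasDerivWithinAt_pos (convex_Ici 0)
    (fun y _ ↦ (hf y).continuousAt.continuousWithinAt)
    (fun y _ ↦ (hf y).hasDerivWithinAt)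
    (fun y hy ↦ hf' y (by rwa [interior_Ici] at hy)) self_mem_Ici hx.le hx

lemma sinh_lt_mul_cosh {x : ℝ} (hx : 0 < x) : sinh x < x * cosh x := by
  have h := apply_zero_lt_of_hasDerivAt_pos (f := fun y ↦ y * cosh y - sinh y)
    (f' := fun y ↦ y * sinh y)
    (fun y ↦ (((hasDerivAt_id y).mul (hasDerivAt_cosh y)).sub (hasDerivAt_sinh y)).congr_deriv
      (by simp only [id]; ring))
    (fun y hy ↦ mul_pos hy (sinh_pos_iff.2 hy)) hx
  simp only [zero_mul, sinh_zero, sub_zero] at h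
  linarith

lemma two_mul_cosh_lt {x : ℝ} (hx : 0 < x) : 2 * cosh x < x * sinh x + 2 := by
  have h := apply_zero_lt_of_hasDerivAt_pos (f := fun y ↦ y * sinh y + 2 - 2 * cosh y)
    (f' := fun y ↦ y * cosh y - sinh y)
    (fun y ↦ ((((hasDerivAt_id y).mul (hasDerivAt_sinh y)).add_const 2).sub
      ((hasDerivAt_cosh y).const_mul 2)).congr_deriv (by simp only [id]; ring))
    (fun y hy ↦ sub_pos.2 (sinh_lt_mul_cosh hy)) hx
  simp only [zero_mul, cosh_zero] at h
  linarith

lemma three_mul_sinh_lt {x : ℝ} (hx : 0 < x) : 3 * sinh x < x * cosh x + 2 * x := by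
  have h := apply_zero_lt_of_hasDerivAt_pos (f := fun y ↦ y * cosh y + 2 * y - 3 * sinh y)
    (f' := fun y ↦ y * sinh y + 2 - 2 * cosh y)
    (fun y ↦ ((((hasDerivAt_id y).mul (hasDerivAt_cosh y)).add
      ((hasDerivAt_id y).const_mul 2)).sub ((hasDerivAt_sinh y).const_mul 3)).congr_deriv
      (by simp only [id]; ring))
    (fun y hy ↦ by linarith [two_mul_cosh_lt hy]) hx
  simp only [zero_mul, sinh_zero] at h
  linarith

lemma four_mul_cosh_lt {x : ℝ} (hx : 0 < x) : 4 * cosh x < x * sinh x + x ^ 2 + 4 := by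
  have h := apply_zero_lt_of_hasDerivAt_pos (f := fun y ↦ y * sinh y + y ^ 2 + 4 - 4 * cosh y)
    (f' := fun y ↦ y * cosh y + 2 * y - 3 * sinh y)
    (fun y ↦ (((((hasDerivAt_id y).mul (hasDerivAt_sinh y)).add (hasDerivAt_pow 2 y)).add_const
      4).sub ((hasDerivAt_cosh y).const_mul 4)).congr_deriv (by simp only [id]; ring))
    (fun y hy ↦ by linarith [three_mul_sinh_lt hy]) hx
  simp only [zero_mul, cosh_zero] at h
  linarith

lemma four_mul_exp_sub_one_sq_lt {x : ℝ} (hx : 0 < x) :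
    4 * (exp x - 1) ^ 2 < x * (exp x ^ 2 - 1) + 2 * x ^ 2 * exp x := by
  have hid : x * (exp x ^ 2 - 1) + 2 * x ^ 2 * exp x - 4 * (exp x - 1) ^ 2 =
      2 * exp x * (x * sinh x + x ^ 2 + 4 - 4 * cosh x) := by
    rw [cosh_eq, sinh_eq, exp_neg]
    field_simp
    ring
  have := mul_pos (mul_pos two_pos (exp_pos x)) (sub_pos.2 (four_mul_cosh_lt hx))
  linarith

lemma delta_eq {a b t : ℝ} (hab : a ≠ b) (ht : t ≠ 0) :
    delta a b t = a + (b - a) * delta 0 1 ((b - a) * t) := by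
  have hc : b - a ≠ 0 := sub_ne_zero.2 hab.symm
  have hv : exp ((b - a) * t) - 1 ≠ 0 := sub_ne_zero.2 (by simp [hc, ht])
  have hbt : exp (b * t) = exp (a * t) * exp ((b - a) * t) := by rw [← exp_add]; ring_nf
  have hden : exp (b * t) - exp (a * t) = exp (a * t) * (exp ((b - a) * t) - 1) := by
    rw [hbt]; ring
  have hu := (exp_pos (a * t)).ne'
  simp only [delta, hden, zero_mul, exp_zero, one_mul, sub_zero]
  rw [hbt]
  generalize exp (a * t) = u at hu ⊢
  generalize exp ((b - a) * t) = v at hv ⊢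
  field_simp
  ring

lemma delta_zero_one_apply (s : ℝ) : delta 0 1 s = exp s / (exp s - 1) - 1 / s := by
  simp only [delta, zero_mul, exp_zero, one_mul, sub_zero]

lemma hasDerivAt_delta_zero_one {s : ℝ} (hs : s ≠ 0) :
    HasDerivAt (delta 0 1) (1 / s ^ 2 - exp s / (exp s - 1) ^ 2) s := by
  have hv : exp s - 1 ≠ 0 := sub_ne_zero.2 (by simp [hs])
  rw [funext delta_zero_one_apply]
  refine (((hasDerivAt_exp s).div ((hasDerivAt_exp s).sub_const 1) hv).sub
    ((hasDerivAt_const s 1).div (hasDerivAt_id' s) hs)).congr_deriv ?_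
  field_simp
  ring

lemma strictAntiOn_delta_zero_one_sub_half_div :
    StrictAntiOn (fun s ↦ (delta 0 1 s - 1 / 2) / s) (Ioi 0) := by
  have hderiv : ∀ s ∈ Ioi (0 : ℝ), HasDerivAt (fun s ↦ (delta 0 1 s - 1 / 2) / s)
      (((1 / s ^ 2 - exp s / (exp s - 1) ^ 2) * s - (delta 0 1 s - 1 / 2)) / s ^ 2) s := by
    intro s hs
    exact (((hasDerivAt_delta_zero_one hs.ne').sub_const (1 / 2)).div (hasDerivAt_id' s)
      hs.ne').congr_deriv (by ring)
  refine strictAntiOn_of_deriv_neg (convex_Ioi 0)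
    (fun s hs ↦ (hderiv s hs).continuousAt.continuousWithinAt) fun s hs ↦ ?_
  rw [interior_Ioi, mem_Ioi] at hs
  have hv : 0 < exp s - 1 := sub_pos.2 (one_lt_exp_iff.2 hs)
  have numerator_eq : (1 / s ^ 2 - exp s / (exp s - 1) ^ 2) * s - (delta 0 1 s - 1 / 2) =
      (4 * (exp s - 1) ^ 2 - (s * (exp s ^ 2 - 1) + 2 * s ^ 2 * exp s)) /
        (2 * s * (exp s - 1) ^ 2) := by
    rw [delta_zero_one_apply]
    field_simp
    ring
  rw [(hderiv s hs).deriv, numerator_eq]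
  have := four_mul_exp_sub_one_sq_lt hs
  exact div_neg_of_neg_of_pos (div_neg_of_neg_of_pos (by linarith) (by positivity)) (by positivity)

lemma mul_delta_zero_one_sub_half_lt {s τ : ℝ} (hs : 0 < s) (hτ0 : 0 < τ) (hτ1 : τ < 1) :
    τ * (delta 0 1 s - 1 / 2) < delta 0 1 (τ * s) - 1 / 2 := by
  have hτs : 0 < τ * s := mul_pos hτ0 hs
  have h := strictAntiOn_delta_zero_one_sub_half_div (mem_Ioi.2 hτs) (mem_Ioi.2 hs)
    (mul_lt_of_lt_one_left hs hτ1)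
  rw [div_lt_div_iff₀ hs hτs] at h
  nlinarith

theorem neg_delta_star_shaped (a b : ℝ) (hab : a < b) (hsum : 0 ≤ a + b)
    (τ : ℝ) (hτ0 : 0 < τ) (hτ1 : τ < 1) (t : ℝ) (ht : 0 < t) :
    τ * ((b * Real.exp (b * t) - a * Real.exp (a * t)) /
        (Real.exp (b * t) - Real.exp (a * t)) - 1 / t) <
      (b * Real.exp (b * (τ * t)) - a * Real.exp (a * (τ * t))) /
        (Real.exp (b * (τ * t)) - Real.exp (a * (τ * t))) - 1 / (τ * t) := by
  change τ * delta a b t < delta a b (τ * t)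
  have hc : 0 < b - a := sub_pos.2 hab
  rw [delta_eq hab.ne ht.ne', delta_eq hab.ne (mul_pos hτ0 ht).ne',
    show (b - a) * (τ * t) = τ * ((b - a) * t) by ring]
  have h := mul_delta_zero_one_sub_half_lt (mul_pos hc ht) hτ0 hτ1
  nlinarith [mul_lt_mul_of_pos_left h hc, mul_nonneg (sub_nonneg.2 hτ1.le) hsum]
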